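/- The assignment R_i ↦ R'_i R_0 and R'_i ↦ R_0^{−1} R_i (i = 0,…,n−1) extends to a group automorphism ω of the presented group B; moreover ω² is the inner automorphism x ↦ R_0^{−1} x R_0, i.e. ω(ω(x)) = R_0^{−1} x R_0 for every x ∈ B. -/

import Mathlib

/-- `altProd a b k` is the alternating product `a * b * a * b * ⋯` with `k` factors. -/
def altProd {M : Type*} [Monoid M] (a b : M) : ℕ → M
  | 0 => 1
  | k + 1 => a * altProd b a k

section Bourbaki
variable {n : ℕ}

/-- The defining relations of the presented group `B`, with generators
`R_i = Sum.inl i` and `R'_i = Sum.inr i`:  `R'_0 = 1`;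
`⟨R'_i,R_j⟩_{m_{ij}} = ⟨R'_j,R_i⟩_{m_{ij}}` and `⟨R_i,R'_j⟩_{m_{ij}} = ⟨R_j,R'_i⟩_{m_{ij}}`
for `i < j` with `m_{ij}` finite (entry `0` encodes `∞`, the relation being omitted). -/
def bourbakiRels (M : CoxeterMatrix (Fin n)) (hn : 0 < n) :
    Set (FreeGroup (Fin n ⊕ Fin n)) :=
  { x | x = FreeGroup.of (Sum.inr (⟨0, hn⟩ : Fin n)) ∨
      (∃ i j : Fin n, i < j ∧ M i j ≠ 0 ∧
        x = altProd (FreeGroup.of (Sum.inr i)) (FreeGroup.of (Sum.inl j)) (M i j) *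
          (altProd (FreeGroup.of (Sum.inr j)) (FreeGroup.of (Sum.inl i)) (M i j))⁻¹) ∨
      (∃ i j : Fin n, i < j ∧ M i j ≠ 0 ∧
        x = altProd (FreeGroup.of (Sum.inl i)) (FreeGroup.of (Sum.inr j)) (M i j) *
          (altProd (FreeGroup.of (Sum.inl j)) (FreeGroup.of (Sum.inr i)) (M i j))⁻¹) }

end Bourbaki

/-!
Write `t = R_0`. Because `(R'_i t)(t⁻¹ R_j) = R'_i R_j` and `(t⁻¹ R_i)(R'_j t) = t⁻¹ (R_i R'_j) t`,
the assignment sends `⟨R_i,R'_j⟩_m` to `⟨R'_i,R_j⟩_m` and `⟨R'_i,R_j⟩_m` to `t⁻¹ ⟨R_i,R'_j⟩_m`,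
each times a power of `t` that depends only on the parity of `m`. So it exchanges the two families
of braid relations, and it sends `R'_0` to `t⁻¹ R_0 = 1`: it defines an endomorphism `ω` of `B`.
Since `ω t = R'_0 t = t`, on generators `ω ∘ ω` is conjugation by `t⁻¹`, which is bijective, hence
so is `ω`.
-/

section AltProd

variable {G : Type*}

lemma altProd_add_two [Monoid G] (a b : G) (k : ℕ) :
    altProd a b (k + 2) = a * b * altProd a b k := by
  simp only [altProd, mul_assoc]

lemma map_altProd {H F : Type*} [Monoid G] [Monoid H] [FunLike F G H] [MonoidHomClass F G H]
    (f : F) (a b : G) (k : ℕ) : f (altProd a b k) = altProd (f a) (f b) k := by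
  induction k generalizing a b with
  | zero => simp [altProd]
  | succ k ih => simp [altProd, ih]

variable [Group G]

lemma altProd_inv_mul_mul (a b t : G) (k : ℕ) :
    altProd (t⁻¹ * a) (b * t) k = t⁻¹ * altProd a b k * if Even k then t else 1 := by
  induction k using Nat.twoStepInduction with
  | zero => simp [altProd]
  | one => simp [altProd]
  | more k ih _ =>
    rw [altProd_add_two, altProd_add_two, ih]
    simp only [Nat.even_add_one, not_not]
    group

lemma altProd_mul_inv_mul (a b t : G) (k : ℕ) :
    altProd (a * t) (t⁻¹ * b) k = altProd a b k * if Even k then 1 else t := by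
  induction k using Nat.twoStepInduction with
  | zero => simp [altProd]
  | one => simp [altProd]
  | more k ih _ =>
    rw [altProd_add_two, altProd_add_two, ih]
    simp only [Nat.even_add_one, not_not]
    group

end AltProd

namespace Bourbaki

variable {n : ℕ} (M : CoxeterMatrix (Fin n)) (hn : 0 < n)

abbrev B : Type := PresentedGroup (bourbakiRels M hn)

abbrev R (i : Fin n) : B M hn := PresentedGroup.of (Sum.inl i)

abbrev R' (i : Fin n) : B M hn := PresentedGroup.of (Sum.inr i)

lemma R'_zero : R' M hn ⟨0, hn⟩ = 1 :=
  PresentedGroup.one_of_mem (Or.inl rfl)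

variable {M hn}

lemma altProd_R'_R {i j : Fin n} (hij : i < j) (hM : M i j ≠ 0) :
    altProd (R' M hn i) (R M hn j) (M i j) = altProd (R' M hn j) (R M hn i) (M i j) := by
  have h := PresentedGroup.mk_eq_mk_of_mul_inv_mem (rels := bourbakiRels M hn)
    (Or.inr (Or.inl ⟨i, j, hij, hM, rfl⟩))
  rwa [map_altProd, map_altProd] at h

lemma altProd_R_R' {i j : Fin n} (hij : i < j) (hM : M i j ≠ 0) :
    altProd (R M hn i) (R' M hn j) (M i j) = altProd (R M hn j) (R' M hn i) (M i j) := by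
  have h := PresentedGroup.mk_eq_mk_of_mul_inv_mem (rels := bourbakiRels M hn)
    (Or.inr (Or.inr ⟨i, j, hij, hM, rfl⟩))
  rwa [map_altProd, map_altProd] at h

variable (M hn)

def omegaGen : Fin n ⊕ Fin n → B M hn :=
  Sum.elim (fun i => R' M hn i * R M hn ⟨0, hn⟩) (fun i => (R M hn ⟨0, hn⟩)⁻¹ * R M hn i)

lemma lift_omegaGen_eq_one : ∀ r ∈ bourbakiRels M hn, FreeGroup.lift (omegaGen M hn) r = 1 := by
  rintro r (rfl | ⟨i, j, hij, hM, rfl⟩ | ⟨i, j, hij, hM, rfl⟩)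
  · simp [omegaGen]
  · rw [map_mul, map_inv, mul_inv_eq_one, map_altProd, map_altProd]
    simp only [FreeGroup.lift_apply_of, omegaGen, Sum.elim_inl, Sum.elim_inr]
    rw [altProd_inv_mul_mul, altProd_inv_mul_mul, altProd_R_R' hij hM]
  · rw [map_mul, map_inv, mul_inv_eq_one, map_altProd, map_altProd]
    simp only [FreeGroup.lift_apply_of, omegaGen, Sum.elim_inl, Sum.elim_inr]
    rw [altProd_mul_inv_mul, altProd_mul_inv_mul, altProd_R'_R hij hM]

def omegaHom : B M hn →* B M hn :=
  PresentedGroup.toGroup (lift_omegaGen_eq_one M hn)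

lemma omegaHom_R (i : Fin n) : omegaHom M hn (R M hn i) = R' M hn i * R M hn ⟨0, hn⟩ :=
  PresentedGroup.toGroup.of _

lemma omegaHom_R' (i : Fin n) : omegaHom M hn (R' M hn i) = (R M hn ⟨0, hn⟩)⁻¹ * R M hn i :=
  PresentedGroup.toGroup.of _

lemma omegaHom_R_zero : omegaHom M hn (R M hn ⟨0, hn⟩) = R M hn ⟨0, hn⟩ := by
  rw [omegaHom_R, R'_zero, one_mul]

lemma omegaHom_omegaHom (x : B M hn) :
    omegaHom M hn (omegaHom M hn x) = (R M hn ⟨0, hn⟩)⁻¹ * x * R M hn ⟨0, hn⟩ := by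
  have h : (omegaHom M hn).comp (omegaHom M hn) = (MulAut.conj (R M hn ⟨0, hn⟩)).symm := by
    refine PresentedGroup.ext fun i => ?_
    rcases i with i | i
    · change omegaHom M hn (omegaHom M hn (R M hn i)) =
        (R M hn ⟨0, hn⟩)⁻¹ * R M hn i * R M hn ⟨0, hn⟩
      rw [omegaHom_R, map_mul, omegaHom_R', omegaHom_R_zero]
    · change omegaHom M hn (omegaHom M hn (R' M hn i)) =
        (R M hn ⟨0, hn⟩)⁻¹ * R' M hn i * R M hn ⟨0, hn⟩
      rw [omegaHom_R', map_mul, map_inv, omegaHom_R_zero, omegaHom_R, mul_assoc]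
  exact DFunLike.congr_fun h x

lemma bijective_omegaHom : Function.Bijective (omegaHom M hn) := by
  have h : omegaHom M hn ∘ omegaHom M hn = (MulAut.conj (R M hn ⟨0, hn⟩)).symm :=
    funext (omegaHom_omegaHom M hn)
  have hbij := (MulAut.conj (R M hn ⟨0, hn⟩)).symm.bijective
  rw [← h] at hbij
  exact ⟨hbij.1.of_comp, hbij.2.of_comp⟩

noncomputable def omega : B M hn ≃* B M hn :=
  MulEquiv.ofBijective (omegaHom M hn) (bijective_omegaHom M hn)

end Bourbaki

/-- The assignment `R_i ↦ R'_i R_0`, `R'_i ↦ R_0⁻¹ R_i` extends to a group automorphism `ω`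
of the presented group `B`, and `ω²` is the inner automorphism `x ↦ R_0⁻¹ x R_0`. -/
theorem omega_automorphism_of_bourbaki_presentation
    (n : ℕ) (hn : 0 < n) (M : CoxeterMatrix (Fin n)) :
    ∃ ω : PresentedGroup (bourbakiRels M hn) ≃* PresentedGroup (bourbakiRels M hn),
      (∀ i : Fin n, ω (PresentedGroup.of (Sum.inl i)) =
        PresentedGroup.of (Sum.inr i) * PresentedGroup.of (Sum.inl (⟨0, hn⟩ : Fin n))) ∧
      (∀ i : Fin n, ω (PresentedGroup.of (Sum.inr i)) =
        (PresentedGroup.of (Sum.inl (⟨0, hn⟩ : Fin n)))⁻¹ * PresentedGroup.of (Sum.inl i)) ∧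
      (∀ x : PresentedGroup (bourbakiRels M hn),
        ω (ω x) = (PresentedGroup.of (Sum.inl (⟨0, hn⟩ : Fin n)))⁻¹ * x *
          PresentedGroup.of (Sum.inl (⟨0, hn⟩ : Fin n))) :=
  ⟨Bourbaki.omega M hn, Bourbaki.omegaHom_R M hn, Bourbaki.omegaHom_R' M hn,
    Bourbaki.omegaHom_omegaHom M hn⟩
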